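/- For all z ∈ ℝ, the quantity z + φ(z)/Φ(z) is strictly positive, where φ and Φ are the standard normal pdf and cdf. -/

import Mathlib

/-!
Multiplying by `Φ(z) > 0`, it suffices that `φ(z) + z Φ(z) > 0`. Since `φ'(t) = -t φ(t)`, we have
`φ(z) = -∫_{-∞}^z t φ(t) dt`, so `φ(z) + z Φ(z) = ∫_{-∞}^z (z - t) φ(t) dt`, the integral of a
function that is positive on `(-∞, z)`.
-/

noncomputable def stdNormalPDF (x : ℝ) : ℝ :=
  Real.exp (-(x ^ 2) / 2) / Real.sqrt (2 * Real.pi)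

noncomputable def stdNormalCDF (x : ℝ) : ℝ :=
  ∫ t in Set.Iic x, stdNormalPDF t

open MeasureTheory Set Filter Topology Real ProbabilityTheory

theorem setIntegral_Iic_pos {f : ℝ → ℝ} {z : ℝ} (hf : IntegrableOn f (Iic z))
    (hpos : ∀ t < z, 0 < f t) : 0 < ∫ t in Iic z, f t := by
  rw [integral_Iic_eq_integral_Iio]
  refine (setIntegral_pos_iff_support_of_nonneg_ae ?_ (hf.mono_set Iio_subset_Iic_self)).2 ?_
  · exact (ae_restrict_iff' measurableSet_Iio).2 (ae_of_all _ fun t ht => (hpos t ht).le)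
  · have : Function.support f ∩ Iio z = Iio z :=
      inter_eq_right.2 fun t ht => (hpos t ht).ne'
    simp [this]

theorem stdNormalPDF_eq_gaussianPDFReal : stdNormalPDF = gaussianPDFReal 0 1 := by
  ext x
  simp [stdNormalPDF, gaussianPDFReal, div_eq_inv_mul]

theorem stdNormalPDF_pos (x : ℝ) : 0 < stdNormalPDF x := by
  unfold stdNormalPDF
  positivity

theorem integrable_stdNormalPDF : Integrable stdNormalPDF :=
  stdNormalPDF_eq_gaussianPDFReal ▸ integrable_gaussianPDFReal 0 1

theorem integrable_mul_stdNormalPDF : Integrable fun x => x * stdNormalPDF x := by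
  have h := (integrable_mul_exp_neg_mul_sq (by norm_num : (0:ℝ) < 1/2)).div_const
    (√(2 * π))
  refine h.congr (ae_of_all _ fun x => ?_)
  simp only [stdNormalPDF]
  ring_nf

theorem hasDerivAt_stdNormalPDF (x : ℝ) : HasDerivAt stdNormalPDF (-x * stdNormalPDF x) x := by
  have h : HasDerivAt (fun x => exp (-(x ^ 2) / 2) / √(2 * π))
      (exp (-(x ^ 2) / 2) * (-(2 * x) / 2) / √(2 * π)) x := by
    have := (((hasDerivAt_pow 2 x).neg.div_const 2).exp).div_const (√(2 * π))
    simpa using this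
  refine h.congr_deriv ?_
  simp only [stdNormalPDF]
  ring

theorem tendsto_stdNormalPDF_atBot : Tendsto stdNormalPDF atBot (𝓝 0) := by
  have hsq : Tendsto (fun x : ℝ => x ^ 2) atBot atTop :=
    ((tendsto_pow_atTop two_ne_zero).comp tendsto_neg_atBot_atTop).congr fun x => by simp
  have h : Tendsto (fun x : ℝ => -(x ^ 2) / 2) atBot atBot :=
    (tendsto_neg_atTop_atBot.comp hsq).atBot_div_const two_pos
  have := (tendsto_exp_atBot.comp h).div_const (√(2 * π))
  rwa [zero_div] at this

theorem stdNormalCDF_pos (z : ℝ) : 0 < stdNormalCDF z :=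
  setIntegral_Iic_pos integrable_stdNormalPDF.integrableOn fun t _ => stdNormalPDF_pos t

theorem setIntegral_Iic_mul_stdNormalPDF (z : ℝ) :
    ∫ t in Iic z, t * stdNormalPDF t = -stdNormalPDF z := by
  have h := integral_Iic_of_hasDerivAt_of_tendsto' (a := z)
    (fun t _ => hasDerivAt_stdNormalPDF t)
    (by simpa only [neg_mul] using integrable_mul_stdNormalPDF.fun_neg.integrableOn)
    tendsto_stdNormalPDF_atBot
  simp_rw [neg_mul, integral_neg, sub_zero] at h
  exact neg_eq_iff_eq_neg.1 h

theorem setIntegral_Iic_sub_mul_stdNormalPDF (z : ℝ) :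
    ∫ t in Iic z, (z - t) * stdNormalPDF t = stdNormalPDF z + z * stdNormalCDF z := by
  simp_rw [sub_mul]
  rw [integral_sub (integrable_stdNormalPDF.const_mul z).integrableOn
    integrable_mul_stdNormalPDF.integrableOn, integral_const_mul,
    setIntegral_Iic_mul_stdNormalPDF, stdNormalCDF]
  ring

theorem stdNormalPDF_add_mul_stdNormalCDF_pos (z : ℝ) :
    0 < stdNormalPDF z + z * stdNormalCDF z := by
  rw [← setIntegral_Iic_sub_mul_stdNormalPDF]
  refine setIntegral_Iic_pos ?_ fun t ht => mul_pos (sub_pos.2 ht) (stdNormalPDF_pos t)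
  simpa only [sub_mul] using
    (integrable_stdNormalPDF.const_mul z |>.sub' integrable_mul_stdNormalPDF).integrableOn

theorem stmt_17 (z : ℝ) : 0 < z + stdNormalPDF z / stdNormalCDF z := by
  have hΦ := stdNormalCDF_pos z
  have h : z + stdNormalPDF z / stdNormalCDF z
      = (stdNormalPDF z + z * stdNormalCDF z) / stdNormalCDF z := by
    field_simp
    ring
  rw [h]
  exact div_pos (stdNormalPDF_add_mul_stdNormalCDF_pos z) hΦ
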